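/- Let s > 0 be real with ∑_{k=1}^∞ exp(−s√(k(k+2))/2) < 1/2 (equivalently s > γ̃_M). Then the function a ↦ N_≤(a)·e^{−sa} is integrable on [0,∞) and ∫_0^∞ N_≤(a) e^{−sa} da = (1/s)·( (1 − 2∑_{k=1}^∞ e^{−s√(k(k+2))/2})^{−1} − 1 ). -/

import Mathlib

open MeasureTheory

/-- The weight of an entry `j : ℤ` encoding the nonzero half-integer `m = j/2`:
`√(|m|(|m|+1)) = √(|j|(|j|+2))/2`. -/
noncomputable def wt (j : ℤ) : ℝ := Real.sqrt (|(j : ℝ)| * (|(j : ℝ)| + 2)) / 2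

/-- The set of `a`-admissible sequences: nonempty lists of nonzero half-integers
`mᵢ = jᵢ/2` with `∑ᵢ √(|mᵢ|(|mᵢ|+1)) ≤ a`. -/
def adm (a : ℝ) : Set (List ℤ) :=
  {l | l ≠ [] ∧ (∀ j ∈ l, j ≠ 0) ∧ (l.map wt).sum ≤ a}

/-- `N_≤(a)`, the number of `a`-admissible sequences. -/
noncomputable def Nle (a : ℝ) : ℕ := Nat.card (adm a)

/-!
Let `W(l)` be the total weight of a sequence `l`. Since `N_≤(a)` counts the `l` with
`W(l) ≤ a`, Tonelli turns the Laplace transform into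
`∑ₗ ∫_{W(l)}^∞ e^{-sa} da = (1/s) ∑ₗ e^{-s W(l)}`. The summand is multiplicative along `l`,
so the sequences of length `n` contribute `qⁿ` with
`q = ∑_{j ≠ 0} e^{-s·wt j} = 2 ∑_{k ≥ 1} e^{-s√(k(k+2))/2}`, and the geometric series over
`n ≥ 1` gives `(1 - q)⁻¹ - 1`. Everything is computed in `ℝ≥0∞`, where all interchanges are
free; the finiteness of the result (`q < 1`) then yields integrability and, through
`N_≤(a) e^{-sa} ≤ ∑ₗ e^{-s W(l)}`, the finiteness of `N_≤(a)`.
-/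

open Real Set
open scoped ENNReal

namespace ENNReal

variable {α : Type*}

theorem tsum_pi_fin_prod (g : α → ℝ≥0∞) :
    ∀ n : ℕ, ∑' f : Fin n → α, ∏ i, g (f i) = (∑' a, g a) ^ n
  | 0 => by simp
  | n + 1 => by
    rw [← (Fin.consEquiv fun _ : Fin (n + 1) => α).tsum_eq, ENNReal.tsum_prod']
    simp only [Fin.consEquiv_apply, Fin.prod_univ_succ, Fin.cons_zero, Fin.cons_succ,
      ENNReal.tsum_mul_left, ENNReal.tsum_mul_right, tsum_pi_fin_prod g n, pow_succ']

theorem tsum_list_prod_map (g : α → ℝ≥0∞) :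
    ∑' l : List α, (l.map g).prod = (1 - ∑' a, g a)⁻¹ := by
  rw [← List.equivSigmaTuple.symm.tsum_eq, ENNReal.tsum_sigma', ← ENNReal.tsum_geometric]
  refine tsum_congr fun n => ?_
  simp only [List.equivSigmaTuple_symm_apply, List.map_ofFn, List.prod_ofFn]
  exact tsum_pi_fin_prod g n

theorem inv_one_sub_ofReal_sub_one {x : ℝ} (hx0 : 0 ≤ x) (hx1 : x < 1) :
    (1 - ENNReal.ofReal x)⁻¹ - 1 = ENNReal.ofReal ((1 - x)⁻¹ - 1) := by
  rw [← ENNReal.ofReal_one, ← ENNReal.ofReal_sub _ hx0,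
    ← ENNReal.ofReal_inv_of_pos (by linarith), ENNReal.ofReal_sub _ zero_le_one]

end ENNReal

theorem integrable_and_integral_eq_of_lintegral_ofReal_eq {α : Type*} [MeasurableSpace α]
    {μ : Measure α} {f : α → ℝ} {c : ℝ} (hfm : AEStronglyMeasurable f μ) (hf : 0 ≤ᵐ[μ] f)
    (hc : 0 ≤ c) (h : ∫⁻ x, ENNReal.ofReal (f x) ∂μ = ENNReal.ofReal c) :
    Integrable f μ ∧ ∫ x, f x ∂μ = c :=
  ⟨⟨hfm, (hasFiniteIntegral_iff_ofReal hf).2 (h ▸ ENNReal.ofReal_lt_top)⟩,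
    by rw [integral_eq_lintegral_of_nonneg_ae hf hfm, h, ENNReal.toReal_ofReal hc]⟩

theorem lintegral_Ici_exp_neg_mul {s : ℝ} (hs : 0 < s) (w : ℝ) :
    ∫⁻ a in Ici w, ENNReal.ofReal (exp (-(s * a))) =
      ENNReal.ofReal (exp (-(s * w)) / s) := by
  have hint := integrableOn_exp_mul_Ioi (neg_lt_zero.2 hs) w
  simp only [neg_mul] at hint
  rw [← restrict_Ioi_eq_restrict_Ici, ← ofReal_integral_eq_lintegral_ofReal hint
    (.of_forall fun _ => (exp_pos _).le)]
  have := integral_exp_mul_Ioi (neg_lt_zero.2 hs) w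
  simp only [neg_mul, div_neg, neg_div, neg_neg] at this
  rw [this]

section Counting

variable {ι : Type*} (w : ι → ℝ) {s : ℝ}

theorem encard_setOf_le_mul_exp_le (hs : 0 ≤ s) (a : ℝ) :
    {i | w i ≤ a}.encard * ENNReal.ofReal (exp (-(s * a))) ≤
      ∑' i, ENNReal.ofReal (exp (-(s * w i))) := by
  rw [← ENNReal.tsum_set_const]
  calc ∑' _ : {i | w i ≤ a}, ENNReal.ofReal (exp (-(s * a)))
      ≤ ∑' i : {i | w i ≤ a}, ENNReal.ofReal (exp (-(s * w i))) :=
        ENNReal.tsum_le_tsum fun i => ENNReal.ofReal_le_ofReal <| exp_le_exp.2 <|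
          neg_le_neg <| mul_le_mul_of_nonneg_left i.2 hs
    _ ≤ _ := ENNReal.tsum_comp_le_tsum_of_injective Subtype.val_injective _

theorem lintegral_encard_setOf_le_mul_exp [Countable ι] (hw : ∀ i, 0 ≤ w i) (hs : 0 < s) :
    ∫⁻ a in Ici 0, {i | w i ≤ a}.encard * ENNReal.ofReal (exp (-(s * a))) =
      ENNReal.ofReal (1 / s) * ∑' i, ENNReal.ofReal (exp (-(s * w i))) := by
  have hsplit : ∀ a, ({i | w i ≤ a}.encard : ℝ≥0∞) * ENNReal.ofReal (exp (-(s * a))) =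
      ∑' i, (Ici (w i)).indicator (fun a => ENNReal.ofReal (exp (-(s * a)))) a := by
    intro a
    rw [← ENNReal.tsum_set_const, tsum_subtype {i | w i ≤ a} fun _ => _]
    exact tsum_congr fun i => by by_cases h : w i ≤ a <;> simp [indicator, h]
  have hmeas : Measurable fun a : ℝ => ENNReal.ofReal (exp (-(s * a))) := by fun_prop
  simp_rw [hsplit]
  rw [lintegral_tsum fun i => (hmeas.indicator measurableSet_Ici).aemeasurable,
    ← ENNReal.tsum_mul_left]
  refine tsum_congr fun i => ?_
  rw [lintegral_indicator measurableSet_Ici, Measure.restrict_restrict measurableSet_Ici,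
    inter_eq_left.2 (Ici_subset_Ici.2 (hw i)), lintegral_Ici_exp_neg_mul hs,
    div_eq_inv_mul, ENNReal.ofReal_mul (inv_nonneg.2 hs.le), one_div]

end Counting

theorem wt_nonneg (j : ℤ) : 0 ≤ wt j := by unfold wt; positivity

theorem wt_neg (j : ℤ) : wt (-j) = wt j := by simp [wt]

theorem wt_natCast_add_one (k : ℕ) :
    wt ((k : ℤ) + 1) = √(((k : ℝ) + 1) * (((k : ℝ) + 1) + 2)) / 2 := by
  simp only [wt]
  push_cast
  rw [abs_of_nonneg (by positivity)]

theorem summable_exp_neg_mul_sqrt {s : ℝ} (hs : 0 < s) :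
    Summable fun k : ℕ => exp (-(s * √(((k : ℝ) + 1) * (((k : ℝ) + 1) + 2)) / 2)) := by
  have hq : exp (-(s / 2)) < 1 := exp_lt_one_iff.2 (by linarith)
  refine .of_nonneg_of_le (fun _ => (exp_pos _).le) (fun k => ?_)
    (summable_geometric_of_lt_one (exp_pos _).le hq)
  have hk : (k : ℝ) ≤ √(((k : ℝ) + 1) * (((k : ℝ) + 1) + 2)) :=
    Real.le_sqrt_of_sq_le (by nlinarith)
  rw [← exp_nat_mul, exp_le_exp]
  nlinarith

/-- Set to `0` at the forbidden entry `j = 0`, so that the product along a list vanishes unless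
all its entries are nonzero. -/
noncomputable def entryWeight (s : ℝ) (j : ℤ) : ℝ≥0∞ :=
  if j = 0 then 0 else ENNReal.ofReal (exp (-(s * wt j)))

theorem tsum_entryWeight {s : ℝ} (hs : 0 < s) :
    ∑' j, entryWeight s j =
      ENNReal.ofReal (2 * ∑' k : ℕ, exp (-(s * √(((k : ℝ) + 1) * (((k : ℝ) + 1) + 2)) / 2))) := by
  have hk : ∀ k : ℕ, entryWeight s ((k : ℤ) + 1) =
      ENNReal.ofReal (exp (-(s * √(((k : ℝ) + 1) * (((k : ℝ) + 1) + 2)) / 2))) := by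
    intro k
    rw [entryWeight, if_neg (by omega), wt_natCast_add_one, mul_div_assoc]
  have hnegk : ∀ k : ℕ, entryWeight s (-((k : ℤ) + 1)) = entryWeight s ((k : ℤ) + 1) := by
    intro k
    simp only [entryWeight, neg_eq_zero, wt_neg]
  rw [tsum_of_add_one_of_neg_add_one ENNReal.summable ENNReal.summable]
  simp only [hnegk, hk]
  rw [entryWeight, if_pos rfl, add_zero,
    ← ENNReal.ofReal_tsum_of_nonneg (fun _ => (exp_pos _).le) (summable_exp_neg_mul_sqrt hs),
    ← two_mul, ENNReal.ofReal_mul zero_le_two, ENNReal.ofReal_ofNat]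

noncomputable def listWt (l : List ℤ) : ℝ := (l.map wt).sum

theorem listWt_nonneg (l : List ℤ) : 0 ≤ listWt l :=
  List.sum_nonneg fun _ hx => by
    obtain ⟨j, -, rfl⟩ := List.mem_map.1 hx
    exact wt_nonneg j

theorem listWt_cons (j : ℤ) (l : List ℤ) : listWt (j :: l) = wt j + listWt l := by
  simp [listWt]

theorem prod_map_entryWeight (s : ℝ) (l : List ℤ) :
    (l.map (entryWeight s)).prod =
      if ∀ j ∈ l, j ≠ 0 then ENNReal.ofReal (exp (-(s * listWt l))) else 0 := by
  induction l with
  | nil => simp [listWt]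
  | cons j l ih =>
    rw [List.map_cons, List.prod_cons, ih]
    by_cases hj : j = 0
    · simp [entryWeight, hj]
    by_cases hl : ∀ i ∈ l, i ≠ 0
    · rw [if_pos hl, if_pos ((List.forall_mem_cons (p := (· ≠ 0))).2 ⟨hj, hl⟩), entryWeight,
        if_neg hj, ← ENNReal.ofReal_mul (exp_pos _).le, ← exp_add, listWt_cons, mul_add, neg_add]
    · rw [if_neg hl, if_neg fun h => hl ((List.forall_mem_cons (p := (· ≠ 0))).1 h).2, mul_zero]

def admissible : Set (List ℤ) := {l | l ≠ [] ∧ ∀ j ∈ l, j ≠ 0}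

theorem tsum_admissible_exp (s : ℝ) :
    ∑' l : admissible, ENNReal.ofReal (exp (-(s * listWt l))) =
      (1 - ∑' j, entryWeight s j)⁻¹ - 1 := by
  refine ENNReal.eq_sub_of_add_eq ENNReal.one_ne_top ?_
  rw [← ENNReal.tsum_list_prod_map, ENNReal.tsum_eq_add_tsum_ite [],
    add_comm (∑' l : admissible, _),
    tsum_subtype admissible fun l => ENNReal.ofReal (exp (-(s * listWt l)))]
  congr 1
  refine tsum_congr fun l => ?_
  by_cases hl : l = [] <;> simp [admissible, indicator, prod_map_entryWeight, hl]

theorem adm_mono : Monotone adm :=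
  fun _ _ hab _ ⟨hne, hnz, hle⟩ => ⟨hne, hnz, hle.trans hab⟩

theorem adm_eq_image (a : ℝ) : adm a = Subtype.val '' {l : admissible | listWt l ≤ a} := by
  ext l
  constructor
  · rintro ⟨hne, hnz, hle⟩
    exact ⟨⟨l, hne, hnz⟩, hle, rfl⟩
  · rintro ⟨⟨l, hne, hnz⟩, hle, rfl⟩
    exact ⟨hne, hnz, hle⟩

theorem encard_adm (a : ℝ) : (adm a).encard = {l : admissible | listWt l ≤ a}.encard := by
  rw [adm_eq_image, Subtype.val_injective.encard_image]

theorem finite_adm_of_tsum_ne_top {s : ℝ} (hs : 0 ≤ s)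
    (h : ∑' l : admissible, ENNReal.ofReal (exp (-(s * listWt l))) ≠ ⊤) (a : ℝ) :
    (adm a).Finite := by
  rw [← Set.encard_ne_top_iff, encard_adm, ← ENat.toENNReal_ne_top]
  refine (ENNReal.lt_top_of_mul_ne_top_left ?_ (ENNReal.ofReal_pos.2 (exp_pos (-(s * a)))).ne').ne
  exact ne_top_of_le_ne_top h (encard_setOf_le_mul_exp_le (fun l : admissible => listWt l) hs a)

theorem cast_Nle_eq_encard {a : ℝ} (h : (adm a).Finite) :
    (Nle a : ℝ≥0∞) = {l : admissible | listWt l ≤ a}.encard := by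
  rw [Nle, Nat.card_coe_set_eq, ← encard_adm, ← h.cast_ncard_eq]
  rfl

/-- for real `s > 0` with `∑_{k≥1} exp(-s√(k(k+2))/2) < 1/2`, the function
`a ↦ N_≤(a)e^{-sa}` is integrable on `[0,∞)` and its integral (the Laplace transform of
`N_≤`) equals `(1/s)((1 - 2∑_{k≥1} e^{-s√(k(k+2))/2})⁻¹ - 1)`. -/
theorem stmt_5 (s : ℝ) (hs : 0 < s)
    (hsum : ∑' k : ℕ,
        Real.exp (-(s * Real.sqrt (((k : ℝ) + 1) * (((k : ℝ) + 1) + 2)) / 2)) < 1 / 2) :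
    IntegrableOn (fun a : ℝ => (Nle a : ℝ) * Real.exp (-(s * a))) (Set.Ici 0) ∧
    ∫ a in Set.Ici (0 : ℝ), (Nle a : ℝ) * Real.exp (-(s * a)) =
      (1 / s) * ((1 - 2 * ∑' k : ℕ,
          Real.exp (-(s * Real.sqrt (((k : ℝ) + 1) * (((k : ℝ) + 1) + 2)) / 2)))⁻¹ - 1) := by
  set S := ∑' k : ℕ, exp (-(s * √(((k : ℝ) + 1) * (((k : ℝ) + 1) + 2)) / 2))
  have h2S : 0 ≤ 2 * S := mul_nonneg zero_le_two (tsum_nonneg fun _ => (exp_pos _).le)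
  have hT : ∑' l : admissible, ENNReal.ofReal (exp (-(s * listWt l))) =
      ENNReal.ofReal ((1 - 2 * S)⁻¹ - 1) := by
    rw [tsum_admissible_exp, tsum_entryWeight hs,
      ENNReal.inv_one_sub_ofReal_sub_one h2S (by linarith)]
  have hfin : ∀ a, (adm a).Finite :=
    finite_adm_of_tsum_ne_top hs.le (hT ▸ ENNReal.ofReal_ne_top)
  have hmono : Monotone fun a => (Nle a : ℝ) :=
    fun a b hab => Nat.cast_le.2 (Nat.card_mono (hfin b) (adm_mono hab))
  have hlint : ∫⁻ a in Ici 0, ENNReal.ofReal ((Nle a : ℝ) * exp (-(s * a))) =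
      ENNReal.ofReal ((1 / s) * ((1 - 2 * S)⁻¹ - 1)) := by
    simp_rw [ENNReal.ofReal_mul (Nat.cast_nonneg _), ENNReal.ofReal_natCast,
      cast_Nle_eq_encard (hfin _)]
    rw [lintegral_encard_setOf_le_mul_exp (fun l : admissible => listWt l)
      (fun l => listWt_nonneg l) hs, hT, ← ENNReal.ofReal_mul (by positivity)]
  refine integrable_and_integral_eq_of_lintegral_ofReal_eq
    (hmono.measurable.mul (by fun_prop)).aestronglyMeasurable
    (.of_forall fun a => by positivity) ?_ hlint
  have : 1 ≤ (1 - 2 * S)⁻¹ := one_le_inv₀ (by linarith) |>.2 (by linarith)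
  exact mul_nonneg (by positivity) (by linarith)
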